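/- arXiv:0903.3322 — 4 statements merged into one kernel-verified Lean document; each statement's English description precedes it below -/
import Mathlib

section
/- Suppose W : ℝ₊ → ℝ is continuous with W(s) ≥ 0 for all s ≥ 0, W(0) > 0, and there exists s̄ > 0 with W(s̄) = 0. Let u : ℝ³ → ℝ₊ be continuous with ∫_{ℝ³} W(u(x)) dx < ∞ and let A ∈ D^{1,2}(ℝ³, ℝ³) satisfy ∫_{ℝ³} |ℓ∇θ - qA|² dx < ∞ for some nonzero integer ℓ and q ∈ ℝ. If u(x) → s̄ as |x| → ∞, then ∫_{ℝ³} |A|⁶ dx = ∞; in particular no such configuration has finite energy. -/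
/-!
On the infinite prism `P = [1,2] × [0,1] × ℝ` one has `|ℓ∇θ|² ≥ c := ℓ²/5`. Writing
`|ℓ∇θ|² ≤ 2|ℓ∇θ - qA|² + 2q²|A|²` and absorbing `2q²|A|² ≤ c/2 + K|A|⁶` (Young), the function
`2|ℓ∇θ - qA|² + K|A|⁶` is at least `c/2` on `P`. If `|A|⁶` were integrable this function would be
integrable, so by Markov's inequality `P` would have finite volume.
-/

open MeasureTheory Real Filter Topology

noncomputable section

abbrev V3 := Fin 3 → ℝ

def gradTheta (x : V3) : V3 :=
  ![x 1 / (x 0 ^ 2 + x 1 ^ 2), -(x 0) / (x 0 ^ 2 + x 1 ^ 2), 0]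

lemma sum_sq_gradTheta (x : V3) : ∑ i, gradTheta x i ^ 2 = (x 0 ^ 2 + x 1 ^ 2)⁻¹ := by
  simp only [gradTheta, Fin.sum_univ_three, Matrix.cons_val_zero, Matrix.cons_val_one,
    Matrix.cons_val_two, Matrix.head_cons, Matrix.tail_cons]
  rcases eq_or_ne (x 0 ^ 2 + x 1 ^ 2) 0 with hr | hr
  · simp [hr]
  · field_simp
    ring

lemma sq_div_five_le_sum_sq_mul_gradTheta (l : ℝ) {x : V3}
    (hx : x ∈ Set.univ.pi ![Set.Icc 1 2, Set.Icc 0 1, Set.univ]) :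
    l ^ 2 / 5 ≤ ∑ i, (l * gradTheta x i) ^ 2 := by
  obtain ⟨h0, h0'⟩ : x 0 ∈ Set.Icc 1 2 := hx 0 trivial
  obtain ⟨h1, h1'⟩ : x 1 ∈ Set.Icc 0 1 := hx 1 trivial
  simp only [mul_pow, ← Finset.mul_sum, sum_sq_gradTheta, div_eq_mul_inv]
  gcongr
  nlinarith

lemma volume_pi_Icc_Icc_univ :
    volume (Set.univ.pi ![Set.Icc (1 : ℝ) 2, Set.Icc 0 1, Set.univ]) = ⊤ := by
  rw [volume_pi_pi, Fin.prod_univ_three]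
  simp

lemma mul_le_add_mul_pow_three {a b t : ℝ} (ha : 0 ≤ a) (hb : 0 < b) (ht : 0 ≤ t) :
    a * t ≤ b + a ^ 3 / b ^ 2 * t ^ 3 := by
  have hs : 0 ≤ a * t / b := by positivity
  have key : a * t / b ≤ 1 + (a * t / b) ^ 3 := by
    rcases le_total (a * t / b) 1 with h | h
    · nlinarith [pow_nonneg hs 3]
    · nlinarith [mul_le_mul h h zero_le_one hs]
  calc a * t = b * (a * t / b) := by field_simp
    _ ≤ b * (1 + (a * t / b) ^ 3) := by gcongr
    _ = b + a ^ 3 / b ^ 2 * t ^ 3 := by field_simp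

lemma sum_sq_le_two_mul_sum_sq_sub_add {ι : Type*} (s : Finset ι) (a b : ι → ℝ) :
    ∑ i ∈ s, a i ^ 2 ≤ 2 * ∑ i ∈ s, (a i - b i) ^ 2 + 2 * ∑ i ∈ s, b i ^ 2 := by
  rw [Finset.mul_sum, Finset.mul_sum, ← Finset.sum_add_distrib]
  gcongr with i
  nlinarith [sq_nonneg (a i - 2 * b i)]

lemma div_two_le_sum_sq_sub_add_sum_sq_pow_three {ι : Type*} (s : Finset ι) (a v : ι → ℝ)
    (q : ℝ) {c : ℝ} (hc : 0 < c) (ha : c ≤ ∑ i ∈ s, a i ^ 2) :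
    c / 2 ≤ 2 * ∑ i ∈ s, (a i - q * v i) ^ 2
      + (2 * q ^ 2) ^ 3 / (c / 2) ^ 2 * (∑ i ∈ s, v i ^ 2) ^ 3 := by
  have hsplit := sum_sq_le_two_mul_sum_sq_sub_add s a (fun i => q * v i)
  simp only [mul_pow, ← Finset.mul_sum] at hsplit
  have hyoung := mul_le_add_mul_pow_three (by positivity : 0 ≤ 2 * q ^ 2) (half_pos hc)
    (s.sum_nonneg fun i _ => sq_nonneg (v i))
  linarith

theorem no_finite_energy_vortex_double_well_general
    (A : V3 → V3) (ℓ : ℤ) (q : ℝ)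
    (hl : ℓ ≠ 0)
    (hK : Integrable
      (fun x : V3 => ∑ i : Fin 3, ((ℓ : ℝ) * gradTheta x i - q * A x i) ^ 2)) :
    ¬ Integrable (fun x : V3 => (∑ i : Fin 3, (A x i) ^ 2) ^ 3) := by
  intro hA
  set c : ℝ := (ℓ : ℝ) ^ 2 / 5
  have hc : 0 < c := by positivity
  have hprism : Set.univ.pi ![Set.Icc 1 2, Set.Icc 0 1, Set.univ] ⊆
      {x | c / 2 ≤ 2 * ∑ i, ((ℓ : ℝ) * gradTheta x i - q * A x i) ^ 2
        + (2 * q ^ 2) ^ 3 / (c / 2) ^ 2 * (∑ i, A x i ^ 2) ^ 3} := fun x hx =>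
    div_two_le_sum_sq_sub_add_sum_sq_pow_three _ _ _ q hc
      (sq_div_five_le_sum_sq_mul_gradTheta _ hx)
  have hfinite := (measure_mono hprism).trans_lt
    (((hK.const_mul 2).add (hA.const_mul _)).measure_ge_lt_top (half_pos hc))
  rw [volume_pi_Icc_Icc_univ] at hfinite
  exact lt_irrefl _ hfinite

/-- Nonexistence of vortices for positive double-well `W`: if `W ≥ 0`, `W(0) > 0`,
`W(s̄) = 0`, `u → s̄` at infinity, `∫ W(u) < ∞`, and `∫ |ℓ∇θ - qA|² < ∞` with `ℓ ≠ 0`,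
then `∫ |A|⁶ = ∞`; in particular no such configuration has finite energy. -/
theorem no_finite_energy_vortex_double_well
    (W : ℝ → ℝ) (sbar : ℝ) (u : V3 → ℝ) (A : V3 → V3) (ℓ : ℤ) (q : ℝ)
    (hWc : Continuous W) (hW1 : ∀ s : ℝ, 0 ≤ s → 0 ≤ W s) (hW2 : 0 < W 0)
    (hsbar : 0 < sbar) (hW3 : W sbar = 0)
    (hu : Continuous u) (hupos : ∀ x, 0 ≤ u x)
    (hWu : Integrable (fun x => W (u x)))
    (hl : ℓ ≠ 0)
    (hAmeas : ∀ i, Measurable fun x => A x i)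
    (hK : Integrable
      (fun x : V3 => ∑ i : Fin 3, ((ℓ : ℝ) * gradTheta x i - q * A x i) ^ 2))
    (hlim : Tendsto u (Filter.cocompact V3) (nhds sbar)) :
    ¬ Integrable (fun x : V3 => (∑ i : Fin 3, (A x i) ^ 2) ^ 3) :=
  no_finite_energy_vortex_double_well_general A ℓ q hl hK
end
end

section
/- Let W = ½s² + N(s) be C² with W ≥ 0, W(0)=W'(0)=0, W''(0)=1, and N(s) ≥ -b s³ for some b > 0. Suppose a sequence uₙ ∈ H¹(ℝ³) with σ := ∫ charge fixed satisfies (1/σ)∫[½|∇uₙ|² + ℓ²uₙ²/(2r²) + W(uₙ)] + σ/(2∫uₙ²) ≤ 1 - δ for some δ > 0. Then ∫N(uₙ) ≤ -δσ and b∫|uₙ|³ ≥ δσ, so ‖uₙ‖_{L³} is bounded below by a positive constant. -/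
open MeasureTheory Real Filter Topology

noncomputable section

def pd (i : Fin 3) (f : V3 → ℝ) (x : V3) : ℝ := fderiv ℝ f x (Pi.single i 1)

/-- If `W(s) = ½s² + N(s)` with `N(s) ≥ -b|s|³`, and the energy/charge ratio of
`uₙ` is `≤ 1 - δ`, then `∫N(uₙ) ≤ -δσ`, `b∫|uₙ|³ ≥ δσ`, and `‖uₙ‖_{L³}` is
bounded below by a positive constant. -/
theorem L3_lower_bound (N : ℝ → ℝ) (b : ℝ) (hb : 0 < b)
    (hN : ∀ s : ℝ, -b * |s| ^ 3 ≤ N s)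
    (σ δ : ℝ) (hσ : 0 < σ) (hδ : 0 < δ) (ℓ : ℤ)
    (u : ℕ → V3 → ℝ)
    (hWint : ∀ n, Integrable fun x : V3 => (1 / 2) * (u n x) ^ 2 + N (u n x))
    (hu2 : ∀ n, Integrable fun x : V3 => (u n x) ^ 2)
    (hu2pos : ∀ n, 0 < ∫ x : V3, (u n x) ^ 2)
    (hu3 : ∀ n, Integrable fun x : V3 => |u n x| ^ 3)
    (hgrad : ∀ n, Integrable fun x : V3 =>
      (∑ i : Fin 3, (pd i (u n) x) ^ 2)
        + (ℓ : ℝ) ^ 2 * (u n x) ^ 2 / (x 0 ^ 2 + x 1 ^ 2))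
    (hratio : ∀ n,
      (1 / σ) * (∫ x : V3, ((1 / 2) * (∑ i : Fin 3, (pd i (u n) x) ^ 2)
          + (ℓ : ℝ) ^ 2 * (u n x) ^ 2 / (2 * (x 0 ^ 2 + x 1 ^ 2))
          + ((1 / 2) * (u n x) ^ 2 + N (u n x))))
        + σ / (2 * ∫ x : V3, (u n x) ^ 2) ≤ 1 - δ) :
    (∀ n, (∫ x : V3, N (u n x)) ≤ -δ * σ)
    ∧ (∀ n, δ * σ ≤ b * ∫ x : V3, |u n x| ^ 3)
    ∧ ∃ c : ℝ, 0 < c ∧ ∀ n, c ≤ ∫ x : V3, |u n x| ^ 3 := by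
  have key : ∀ n, (∫ x : V3, N (u n x)) ≤ -δ * σ := by
    intro n
    set I2 := ∫ x : V3, (u n x) ^ 2 with hI2
    have hI2pos : 0 < I2 := hu2pos n
    -- integrability of N ∘ u
    have hNint : Integrable fun x : V3 => N (u n x) :=
      ((hWint n).sub ((hu2 n).const_mul (1 / 2))).congr
        (Eventually.of_forall fun x => by simp only [Pi.sub_apply]; ring)
    -- integrability of the gradient part (with the 1/2 factors)
    have hG : Integrable fun x : V3 => (1 / 2) * (∑ i : Fin 3, (pd i (u n) x) ^ 2)
        + (ℓ : ℝ) ^ 2 * (u n x) ^ 2 / (2 * (x 0 ^ 2 + x 1 ^ 2)) :=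
      ((hgrad n).const_mul (1 / 2)).congr (Eventually.of_forall fun x => by
        dsimp only; rw [mul_comm (2:ℝ) (x 0 ^ 2 + x 1 ^ 2), ← div_div]; ring)
    set IG := ∫ x : V3, ((1 / 2) * (∑ i : Fin 3, (pd i (u n) x) ^ 2)
        + (ℓ : ℝ) ^ 2 * (u n x) ^ 2 / (2 * (x 0 ^ 2 + x 1 ^ 2))) with hIG
    have hIGnn : 0 ≤ IG := by
      apply integral_nonneg
      intro x
      have h1 : (0:ℝ) ≤ (1 / 2) * (∑ i : Fin 3, (pd i (u n) x) ^ 2) := by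
        apply mul_nonneg (by norm_num)
        exact Finset.sum_nonneg fun i _ => sq_nonneg _
      have h2 : (0:ℝ) ≤ (ℓ : ℝ) ^ 2 * (u n x) ^ 2 / (2 * (x 0 ^ 2 + x 1 ^ 2)) := by
        apply div_nonneg (by positivity) (by positivity)
      exact add_nonneg h1 h2
    -- split the integral in hratio
    have hsplit : (∫ x : V3, ((1 / 2) * (∑ i : Fin 3, (pd i (u n) x) ^ 2)
          + (ℓ : ℝ) ^ 2 * (u n x) ^ 2 / (2 * (x 0 ^ 2 + x 1 ^ 2))
          + ((1 / 2) * (u n x) ^ 2 + N (u n x))))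
        = IG + ((1 / 2) * I2 + (∫ x : V3, N (u n x))) := by
      rw [integral_add hG (hWint n), integral_add ((hu2 n).const_mul (1 / 2)) hNint,
        integral_const_mul _ _]
    set IN := ∫ x : V3, N (u n x) with hIN
    have hr : (1 / σ) * (IG + ((1 / 2) * I2 + IN)) + σ / (2 * I2) ≤ 1 - δ := by
      have := hratio n
      rw [hsplit] at this
      exact this
    -- AM-GM
    have hAM : 1 ≤ I2 / (2 * σ) + σ / (2 * I2) := by
      rw [div_add_div _ _ (by positivity) (by positivity), le_div_iff₀ (by positivity)]
      nlinarith [sq_nonneg (I2 - σ)]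
    have hexp : (1 / σ) * (IG + ((1 / 2) * I2 + IN))
        = (1 / σ) * IG + I2 / (2 * σ) + (1 / σ) * IN := by
      field_simp
      ring
    have hIGσ : 0 ≤ (1 / σ) * IG := by positivity
    have h3 : (1 / σ) * IN ≤ -δ := by
      rw [hexp] at hr
      linarith
    have h4 : σ * ((1 / σ) * IN) ≤ σ * (-δ) := mul_le_mul_of_nonneg_left h3 hσ.le
    have h5 : σ * ((1 / σ) * IN) = IN := by field_simp
    rw [h5] at h4
    linarith
  have key2 : ∀ n, δ * σ ≤ b * ∫ x : V3, |u n x| ^ 3 := by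
    intro n
    have hNint : Integrable fun x : V3 => N (u n x) :=
      ((hWint n).sub ((hu2 n).const_mul (1 / 2))).congr
        (Eventually.of_forall fun x => by simp only [Pi.sub_apply]; ring)
    have hmono : (∫ x : V3, -b * |u n x| ^ 3) ≤ ∫ x : V3, N (u n x) :=
      integral_mono ((hu3 n).const_mul (-b)) hNint fun x => hN (u n x)
    rw [integral_const_mul _ _] at hmono
    have := key n
    nlinarith
  refine ⟨key, key2, ⟨δ * σ / b, by positivity, fun n => ?_⟩⟩
  rw [div_le_iff₀ hb]
  have := key2 n
  linarith [key2 n]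
end
end

section
/- Let (uₙ) be bounded in H¹(ℝ³) with ‖uₙ‖_{L³(ℝ³)} ≥ c₁ > 0. Define Ω_j = {x : j ≤ x₃ < j+1} for j ∈ ℤ. Then for each large n there exists an integer jₙ such that ‖uₙ‖_{L³(Ω_{jₙ})} ≥ c₄ for a constant c₄ > 0 depending only on c₁, the Sobolev constant of H¹(Ω_j) ↪ L³(Ω_j) (uniform in j), and sup‖uₙ‖_{H¹}. -/
open MeasureTheory Real Filter Topology

noncomputable section

/-!
On a segment of length one, `w(x)² ≤ ∫ (w² + |(w²)'|) ≤ 2 ∫ (|∇w|² + w²)`. Through a point of a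
slab `Ω = {a ≤ x₃ < a + 1}` every coordinate direction contains such a segment lying in `Ω`, so
the Gagliardo–Nirenberg product inequality gives the Sobolev bound
`∫_Ω |w|³ ≤ (2 ‖w‖²_{H¹(Ω)})^{3/2}`, with a constant independent of the slab. Hence
`∫_{Ω_j} |w|³ ≤ (sup_j ∫_{Ω_j} |w|³)^{1/3} · 2 ‖w‖²_{H¹(Ω_j)}`, and summing over `j` gives
`c₁ ≤ (sup_j ∫_{Ω_j} |w|³)^{1/3} · 2B`.
-/

open Set Function
open scoped ENNReal

theorem le_setAverage_add_setIntegral_abs_of_hasDerivAt {I : Set ℝ} (hI : I.OrdConnected)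
    (hI₀ : volume I ≠ 0) (hI_top : volume I ≠ ∞) {g G : ℝ → ℝ}
    (hg : ∀ t ∈ I, HasDerivAt g (G t) t) (hgi : IntegrableOn g I) (hGi : IntegrableOn G I)
    {s : ℝ} (hs : s ∈ I) :
    g s ≤ (⨍ t in I, g t) + ∫ t in I, |G t| := by
  obtain ⟨t₀, ht₀, hgt₀⟩ := exists_le_setAverage hI₀ hI_top hgi
  have hsub : uIcc t₀ s ⊆ I := hI.uIcc_subset ht₀ hs
  have hftc : ∫ t in t₀..s, G t = g s - g t₀ :=
    intervalIntegral.integral_eq_sub_of_hasDerivAt (fun t ht => hg t (hsub ht))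
      (hGi.mono_set hsub).intervalIntegrable
  have hvar : g s - g t₀ ≤ ∫ t in I, |G t| :=
    calc g s - g t₀ ≤ |∫ t in t₀..s, G t| := hftc ▸ le_abs_self _
      _ ≤ ∫ t in uIoc t₀ s, |G t| := by
        simpa only [Real.norm_eq_abs] using
          intervalIntegral.norm_integral_le_integral_norm_uIoc (f := G) (μ := volume)
      _ ≤ ∫ t in I, |G t| :=
        setIntegral_mono_set hGi.abs (.of_forall fun t => abs_nonneg _)
          (uIoc_subset_uIcc.trans hsub).eventuallyLE
  linarith

def h1Density (w : V3 → ℝ) (x : V3) : ℝ := (∑ i : Fin 3, pd i w x ^ 2) + w x ^ 2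

lemma h1Density_nonneg (w : V3 → ℝ) (x : V3) : 0 ≤ h1Density w x := by
  unfold h1Density; positivity

lemma measurable_pd (w : V3 → ℝ) (i : Fin 3) : Measurable (pd i w) :=
  measurable_fderiv_apply_const ℝ w (Pi.single i 1)

lemma Continuous.measurable_h1Density {w : V3 → ℝ} (hw : Continuous w) :
    Measurable (h1Density w) :=
  (Finset.measurable_sum _ fun k _ => (measurable_pd w k).pow_const 2).add
    (hw.measurable.pow_const 2)

lemma sq_add_abs_two_mul_pd_le (w : V3 → ℝ) (i : Fin 3) (x : V3) :
    w x ^ 2 + |2 * w x * pd i w x| ≤ 2 * h1Density w x := by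
  have hi : pd i w x ^ 2 ≤ ∑ k, pd k w x ^ 2 :=
    Finset.single_le_sum (f := fun k => pd k w x ^ 2) (fun k _ => sq_nonneg _)
      (Finset.mem_univ i)
  have hab : |2 * w x * pd i w x| ≤ w x ^ 2 + pd i w x ^ 2 :=
    abs_le.2 ⟨by nlinarith [sq_nonneg (w x + pd i w x)], by nlinarith [sq_nonneg (w x - pd i w x)]⟩
  unfold h1Density
  linarith [sq_nonneg (pd i w x)]

section

variable {w : V3 → ℝ}

lemma hasDerivAt_comp_update (hw : Differentiable ℝ w) (x : V3) (i : Fin 3) (t : ℝ) :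
    HasDerivAt (fun s => w (update x i s)) (pd i w (update x i t)) t :=
  (hw _).hasFDerivAt.comp_hasDerivAt t (hasDerivAt_update x i t)

theorem ofReal_sq_le_lintegral_h1Density_line (hw : Differentiable ℝ w) (x : V3) (i : Fin 3)
    {a : ℝ} (hx : x i ∈ Ico a (a + 1)) :
    ENNReal.ofReal (w x ^ 2) ≤
      ∫⁻ t in Ico a (a + 1), ENNReal.ofReal (2 * h1Density w (update x i t)) := by
  set I := Ico a (a + 1)
  set H : ℝ → ℝ := fun t => 2 * h1Density w (update x i t)
  have hH₀ : ∀ t, 0 ≤ H t := fun t => mul_nonneg zero_le_two (h1Density_nonneg w _)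
  by_cases htop : ∫⁻ t in I, ENNReal.ofReal (H t) = ∞
  · exact htop ▸ le_top
  have hupd : Measurable (update x i) := measurable_update x
  have hHi : IntegrableOn H I :=
    ⟨((hw.continuous.measurable_h1Density.comp hupd).const_mul 2).aestronglyMeasurable,
      (hasFiniteIntegral_iff_ofReal (.of_forall hH₀)).2 (lt_top_iff_ne_top.2 htop)⟩
  set g : ℝ → ℝ := fun t => w (update x i t) ^ 2
  set G : ℝ → ℝ := fun t => 2 * w (update x i t) * pd i w (update x i t)
  have hgG : ∀ t, g t + |G t| ≤ H t := fun t => sq_add_abs_two_mul_pd_le w i _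
  have hwi : Measurable fun t => w (update x i t) := hw.continuous.measurable.comp hupd
  have hgi : IntegrableOn g I := hHi.mono' (hwi.pow_const 2).aestronglyMeasurable
    (.of_forall fun t => by
      rw [Real.norm_eq_abs, abs_of_nonneg (sq_nonneg _)]; linarith [hgG t, abs_nonneg (G t)])
  have hGi : IntegrableOn G I :=
    hHi.mono' ((hwi.const_mul 2).mul ((measurable_pd w i).comp hupd)).aestronglyMeasurable
      (.of_forall fun t => by rw [Real.norm_eq_abs]; linarith [hgG t, sq_nonneg (w (update x i t))])
  have hline : g (x i) ≤ (⨍ t in I, g t) + ∫ t in I, |G t| :=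
    le_setAverage_add_setIntegral_abs_of_hasDerivAt ordConnected_Ico (by simp) (by simp)
      (fun t _ => ((hasDerivAt_comp_update hw x i t).pow 2).congr_deriv (by ring)) hgi hGi hx
  rw [setAverage_eq, show volume.real I = 1 by simp [I], inv_one, one_smul,
    ← integral_add hgi hGi.abs] at hline
  calc ENNReal.ofReal (w x ^ 2) = ENNReal.ofReal (g (x i)) := by simp [g]
    _ ≤ ENNReal.ofReal (∫ t in I, H t) :=
      ENNReal.ofReal_le_ofReal (hline.trans (setIntegral_mono (hgi.add hGi.abs) hHi hgG))
    _ = ∫⁻ t in I, ENNReal.ofReal (H t) := ofReal_integral_eq_lintegral_ofReal hHi (.of_forall hH₀)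

def slab (k : Fin 3) (a : ℝ) : Set V3 := (fun x => x k) ⁻¹' Ico a (a + 1)

lemma measurableSet_slab (k : Fin 3) (a : ℝ) : MeasurableSet (slab k a) :=
  measurable_pi_apply k measurableSet_Ico

theorem ofReal_sq_le_lintegral_indicator_slab_line (hw : Differentiable ℝ w) {k : Fin 3} {a : ℝ}
    {x : V3} (hx : x ∈ slab k a) (i : Fin 3) :
    ENNReal.ofReal (w x ^ 2) ≤
      ∫⁻ t, (slab k a).indicator (fun y => ENNReal.ofReal (2 * h1Density w y)) (update x i t) := by
  obtain ⟨b, hxb, hseg⟩ :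
      ∃ b, x i ∈ Ico b (b + 1) ∧ ∀ t ∈ Ico b (b + 1), update x i t ∈ slab k a := by
    rcases eq_or_ne i k with rfl | hik
    · exact ⟨a, hx, fun t ht => by simpa [slab] using ht⟩
    · exact ⟨x i, ⟨le_rfl, lt_add_one _⟩, fun t _ => by
        simpa [slab, update_of_ne hik.symm] using hx⟩
  calc ENNReal.ofReal (w x ^ 2)
      ≤ ∫⁻ t in Ico b (b + 1), ENNReal.ofReal (2 * h1Density w (update x i t)) :=
        ofReal_sq_le_lintegral_h1Density_line hw x i hxb
    _ = ∫⁻ t in Ico b (b + 1),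
          (slab k a).indicator (fun y => ENNReal.ofReal (2 * h1Density w y)) (update x i t) :=
        setLIntegral_congr_fun measurableSet_Ico fun t ht =>
          (indicator_of_mem (hseg t ht) fun y => ENNReal.ofReal (2 * h1Density w y)).symm
    _ ≤ _ := setLIntegral_le_lintegral _ _

lemma ofReal_abs_pow_three_eq_prod (r : ℝ) :
    ENNReal.ofReal (|r| ^ 3) = ∏ _i : Fin 3, ENNReal.ofReal (r ^ 2) ^ (1 / 2 : ℝ) := by
  rw [Finset.prod_const, Finset.card_univ, Fintype.card_fin,
    ENNReal.ofReal_rpow_of_nonneg (sq_nonneg r) (by norm_num), ← Real.sqrt_eq_rpow,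
    Real.sqrt_sq_eq_abs, ENNReal.ofReal_pow (abs_nonneg r)]

theorem lintegral_slab_abs_pow_three_le (hw : Differentiable ℝ w) (k : Fin 3) (a : ℝ) :
    ∫⁻ x in slab k a, ENNReal.ofReal (|w x| ^ 3) ≤
      (∫⁻ x in slab k a, ENNReal.ofReal (2 * h1Density w x)) ^ (3 / 2 : ℝ) := by
  set F : V3 → ℝ≥0∞ := (slab k a).indicator fun y => ENNReal.ofReal (2 * h1Density w y)
  have hF : Measurable F :=
    ((hw.continuous.measurable_h1Density.const_mul 2).ennreal_ofReal).indicator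
      (measurableSet_slab k a)
  have hGN := lintegral_prod_lintegral_pow_le (fun _ : Fin 3 => (volume : Measure ℝ))
    (p := 3 / 2) (by rw [Fintype.card_fin]; constructor <;> norm_num) hF
  rw [← volume_pi, Fintype.card_fin, show (1 : ℝ) / ((3 : ℕ) - 1) = 1 / 2 by norm_num] at hGN
  rw [← lintegral_indicator (measurableSet_slab k a),
    ← lintegral_indicator (measurableSet_slab k a)]
  refine le_trans (lintegral_mono fun x => ?_) hGN
  by_cases hx : x ∈ slab k a
  · rw [indicator_of_mem hx, ofReal_abs_pow_three_eq_prod]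
    exact Finset.prod_le_prod' fun i _ =>
      ENNReal.rpow_le_rpow (ofReal_sq_le_lintegral_indicator_slab_line hw hx i) (by norm_num)
  · rw [indicator_of_notMem hx]
    exact zero_le

end

theorem tsum_lintegral_slab (k : Fin 3) (G : V3 → ℝ≥0∞) :
    ∑' j : ℤ, ∫⁻ x in slab k j, G x = ∫⁻ x, G x := by
  have hcover : ⋃ j : ℤ, slab k j = univ := by
    simp only [slab, ← preimage_iUnion, iUnion_Ico_intCast, preimage_univ]
  rw [← lintegral_iUnion (s := fun j : ℤ => slab k j) (fun j => measurableSet_slab k j)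
    (fun i j hij => (pairwise_disjoint_Ico_intCast ℝ hij).preimage _), hcover,
    Measure.restrict_univ]

theorem ENNReal.tsum_le_iSup_rpow_mul_tsum {ι : Type*} {A C : ι → ℝ≥0∞} {p : ℝ} (hp : 1 ≤ p)
    (hAC : ∀ i, A i ≤ C i ^ p) :
    ∑' i, A i ≤ (⨆ i, A i) ^ (1 - p⁻¹) * ∑' i, C i := by
  have hp₀ : 0 < p := by linarith
  rw [← ENNReal.tsum_mul_left]
  refine ENNReal.tsum_le_tsum fun i => ?_
  calc A i = A i ^ (1 - p⁻¹) * A i ^ p⁻¹ := by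
        rw [← ENNReal.rpow_add_of_nonneg _ _ (sub_nonneg.2 (inv_le_one_of_one_le₀ hp))
          (inv_nonneg.2 hp₀.le), sub_add_cancel, ENNReal.rpow_one]
    _ ≤ (⨆ i, A i) ^ (1 - p⁻¹) * (C i ^ p) ^ p⁻¹ := by
        gcongr
        · exact sub_nonneg.2 (inv_le_one_of_one_le₀ hp)
        · exact le_iSup A i
        · exact hAC i
    _ = (⨆ i, A i) ^ (1 - p⁻¹) * C i := by
        rw [← ENNReal.rpow_mul, mul_inv_cancel₀ hp₀.ne', ENNReal.rpow_one]

theorem ofReal_div_pow_le_iSup_lintegral_slab {w : V3 → ℝ} (hw : Differentiable ℝ w) (k : Fin 3)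
    {c K : ℝ} (hK : 0 < K) (hH1 : Integrable (h1Density w)) (hHK : 2 * ∫ x, h1Density w x ≤ K)
    (hc : ENNReal.ofReal c ≤ ∫⁻ x, ENNReal.ofReal (|w x| ^ 3)) :
    ENNReal.ofReal (c / K) ^ 3 ≤ ⨆ j : ℤ, ∫⁻ x in slab k j, ENNReal.ofReal (|w x| ^ 3) := by
  set S := ⨆ j : ℤ, ∫⁻ x in slab k j, ENNReal.ofReal (|w x| ^ 3)
  have hsum := ENNReal.tsum_le_iSup_rpow_mul_tsum (p := 3 / 2) (by norm_num)
    fun j : ℤ => lintegral_slab_abs_pow_three_le hw k j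
  rw [tsum_lintegral_slab, tsum_lintegral_slab,
    ← ofReal_integral_eq_lintegral_ofReal (hH1.const_mul 2)
      (.of_forall fun x => mul_nonneg zero_le_two (h1Density_nonneg w x)),
    integral_const_mul, show (1 : ℝ) - (3 / 2)⁻¹ = 3⁻¹ by norm_num] at hsum
  have hcS : ENNReal.ofReal c ≤ S ^ (3 : ℝ)⁻¹ * ENNReal.ofReal K :=
    hc.trans (hsum.trans (mul_le_mul_right (ENNReal.ofReal_le_ofReal hHK) _))
  have hroot : ENNReal.ofReal (c / K) ≤ S ^ (3 : ℝ)⁻¹ := by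
    rw [ENNReal.ofReal_div_of_pos hK]
    exact ENNReal.div_le_of_le_mul hcS
  rw [ENNReal.le_rpow_inv_iff (by norm_num)] at hroot
  exact_mod_cast hroot

theorem slab_concentration_general (c₁ B : ℝ) (hc₁ : 0 < c₁) (u : ℕ → V3 → ℝ)
    (hdiff : ∀ n, Differentiable ℝ (u n))
    (hH1 : ∀ n, Integrable fun x : V3 =>
      (∑ i : Fin 3, (pd i (u n) x) ^ 2) + (u n x) ^ 2)
    (hB : ∀ n, (∫ x : V3, ((∑ i : Fin 3, (pd i (u n) x) ^ 2) + (u n x) ^ 2)) ≤ B)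
    (hc : ∀ n, c₁ ≤ ∫ x : V3, |u n x| ^ 3) :
    ∃ c₄ : ℝ, 0 < c₄ ∧ ∀ n, ∃ j : ℤ,
      c₄ ≤ ∫ x in {x : V3 | (j : ℝ) ≤ x 2 ∧ x 2 < (j : ℝ) + 1}, |u n x| ^ 3 := by
  have hB₀ : 0 ≤ B := (integral_nonneg (h1Density_nonneg (u 0))).trans (hB 0)
  set K := 2 * (B + 1)
  have hK : 0 < K := by positivity
  refine ⟨(c₁ / K) ^ 3 / 2, by positivity, fun n => ?_⟩
  have hint : Integrable fun x => |u n x| ^ 3 := .of_integral_ne_zero (by linarith [hc n])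
  have hpos : ∀ μ : Measure V3, 0 ≤ᵐ[μ] fun x => |u n x| ^ 3 :=
    fun _ => .of_forall fun x => by positivity
  have hmass : ENNReal.ofReal c₁ ≤ ∫⁻ x, ENNReal.ofReal (|u n x| ^ 3) := by
    rw [← ofReal_integral_eq_lintegral_ofReal hint (hpos _)]
    exact ENNReal.ofReal_le_ofReal (hc n)
  have hsup := ofReal_div_pow_le_iSup_lintegral_slab (hdiff n) 2 hK (hH1 n)
    (by unfold h1Density; linarith [hB n]) hmass
  rw [← ENNReal.ofReal_pow (by positivity)] at hsup
  obtain ⟨j, hj⟩ := lt_iSup_iff.1 (((ENNReal.ofReal_lt_ofReal_iff (by positivity)).2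
    (half_lt_self (by positivity))).trans_le hsup)
  rw [← ofReal_integral_eq_lintegral_ofReal hint.integrableOn (hpos _)] at hj
  exact ⟨j, ((ENNReal.ofReal_lt_ofReal_iff').1 hj).1.le⟩

/-- Concentration in slabs: if `(uₙ)` is bounded in `H¹(ℝ³)` and
`∫|uₙ|³ ≥ c₁ > 0`, then there is `c₄ > 0` such that for each `n` some slab
`Ω_j = {j ≤ x₃ < j+1}` carries `∫_{Ω_j}|uₙ|³ ≥ c₄`. -/
theorem slab_concentration (c₁ B : ℝ) (hc₁ : 0 < c₁) (u : ℕ → V3 → ℝ)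
    (hdiff : ∀ n, Differentiable ℝ (u n))
    (hH1 : ∀ n, Integrable fun x : V3 =>
      (∑ i : Fin 3, (pd i (u n) x) ^ 2) + (u n x) ^ 2)
    (hB : ∀ n, (∫ x : V3, ((∑ i : Fin 3, (pd i (u n) x) ^ 2) + (u n x) ^ 2)) ≤ B)
    (hu3 : ∀ n, Integrable fun x : V3 => |u n x| ^ 3)
    (hc : ∀ n, c₁ ≤ ∫ x : V3, |u n x| ^ 3) :
    ∃ c₄ : ℝ, 0 < c₄ ∧ ∀ n, ∃ j : ℤ,
      c₄ ≤ ∫ x in {x : V3 | (j : ℝ) ≤ x 2 ∧ x 2 < (j : ℝ) + 1}, |u n x| ^ 3 :=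
  slab_concentration_general c₁ B hc₁ u hdiff hH1 hB hc
end
end

section
/- Let W be C² with W ≥ 0, W(0)=W'(0)=0, W''(0)=m²>0. Suppose (uₙ) ⊂ H¹(ℝ³) satisfies: ∫W(uₙ) ≤ C, ∫|∇uₙ|² ≤ C, and ∫uₙ⁶ ≤ C (the last by Sobolev). Then ∫uₙ² is bounded. -/
/-! By Taylor's theorem `W(s) ≥ (m²/4) s²` for `|s| < ε`, while for `|s| ≥ ε` one has
`s² ≤ ε⁻⁴ s⁶`. Since `W ≥ 0`, both regimes give the pointwise bound
`s² ≤ (4/m²) W(s) + ε⁻⁴ s⁶`, which integrates to a uniform bound on `∫ uₙ²`. -/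

open MeasureTheory Real Filter Topology

noncomputable section

theorem eventually_mul_sq_le_of_deriv2 {W : ℝ → ℝ} (hW : ContDiff ℝ 2 W) (h0 : W 0 = 0)
    (h1 : deriv W 0 = 0) {c : ℝ} (hc : c < deriv (deriv W) 0 / 2) :
    ∀ᶠ s in 𝓝 0, c * s ^ 2 ≤ W s := by
  have htaylor : (fun s => W s - deriv (deriv W) 0 / 2 * s ^ 2) =o[𝓝 0] fun s => s ^ 2 := by
    refine (taylor_isLittleO_univ (x₀ := 0) hW).congr' (Eventually.of_forall fun s => ?_)
      (Eventually.of_forall fun s => by simp)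
    simp only [taylorWithinEval_succ, taylor_within_zero_eval, h0, h1, iteratedDerivWithin_univ,
      iteratedDeriv_succ, iteratedDeriv_zero, CharP.cast_eq_zero, Nat.factorial_zero,
      Nat.factorial_one, Nat.cast_one, Nat.reduceAdd, inv_one, sub_zero, pow_one, one_mul,
      mul_one, mul_zero, zero_add, add_zero, smul_eq_mul, sub_right_inj]
    ring
  filter_upwards [htaylor.def (sub_pos.2 hc)] with s hs
  rw [Real.norm_eq_abs, Real.norm_eq_abs, abs_of_nonneg (sq_nonneg s)] at hs
  linarith [neg_abs_le (W s - deriv (deriv W) 0 / 2 * s ^ 2)]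

theorem sq_le_of_mul_sq_le_of_abs_lt {W : ℝ → ℝ} (hWnonneg : ∀ s, 0 ≤ W s) {c ε : ℝ}
    (hc : 0 < c) (hε : 0 < ε) (hquad : ∀ s, |s| < ε → c * s ^ 2 ≤ W s) (s : ℝ) :
    s ^ 2 ≤ c⁻¹ * W s + (ε ^ 4)⁻¹ * s ^ 6 := by
  rcases lt_or_ge |s| ε with hs | hs
  · have hW : s ^ 2 ≤ c⁻¹ * W s := by
      rw [inv_mul_eq_div, le_div_iff₀ hc, mul_comm]
      exact hquad s hs
    have : 0 ≤ (ε ^ 4)⁻¹ * s ^ 6 := by positivity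
    linarith
  · have hε4 : ε ^ 4 ≤ s ^ 4 := by
      simpa only [Even.pow_abs (by decide : Even 4)] using pow_le_pow_left₀ hε.le hs 4
    have hs6 : s ^ 2 ≤ (ε ^ 4)⁻¹ * s ^ 6 := by
      rw [inv_mul_eq_div, le_div_iff₀ (by positivity)]
      calc s ^ 2 * ε ^ 4 ≤ s ^ 2 * s ^ 4 := by gcongr
        _ = s ^ 6 := by ring
    have : 0 ≤ c⁻¹ * W s := mul_nonneg (inv_nonneg.2 hc.le) (hWnonneg s)
    linarith

theorem integrable_sq_and_integral_sq_le {α : Type*} [MeasurableSpace α] {μ : Measure α}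
    {W : ℝ → ℝ} {a b : ℝ} (hbound : ∀ s, s ^ 2 ≤ a * W s + b * s ^ 6) {f : α → ℝ}
    (hf : AEStronglyMeasurable f μ) (hWf : Integrable (fun x => W (f x)) μ)
    (hf6 : Integrable (fun x => f x ^ 6) μ) :
    Integrable (fun x => f x ^ 2) μ ∧
      ∫ x, f x ^ 2 ∂μ ≤ a * ∫ x, W (f x) ∂μ + b * ∫ x, f x ^ 6 ∂μ := by
  have hmajor : Integrable (fun x => a * W (f x) + b * f x ^ 6) μ :=
    (hWf.const_mul a).add (hf6.const_mul b)
  have hf2 : Integrable (fun x => f x ^ 2) μ :=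
    hmajor.mono' (hf.pow 2) (Eventually.of_forall fun x => by
      simpa only [Real.norm_eq_abs, abs_of_nonneg (sq_nonneg (f x))] using hbound (f x))
  refine ⟨hf2, ?_⟩
  calc ∫ x, f x ^ 2 ∂μ ≤ ∫ x, (a * W (f x) + b * f x ^ 6) ∂μ :=
        integral_mono hf2 hmajor fun x => hbound (f x)
    _ = a * ∫ x, W (f x) ∂μ + b * ∫ x, f x ^ 6 ∂μ := by
        rw [integral_add (hWf.const_mul a) (hf6.const_mul b), integral_const_mul,
          integral_const_mul]

theorem L2_bound_from_W_general (W : ℝ → ℝ) (m C : ℝ) (hm : 0 < m)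
    (hWsmooth : ContDiff ℝ 2 W) (hWpos : ∀ s : ℝ, 0 ≤ W s)
    (hW0 : W 0 = 0) (hW0' : deriv W 0 = 0) (hW0'' : deriv (deriv W) 0 = m ^ 2)
    (u : ℕ → V3 → ℝ)
    (hmeas : ∀ n, AEStronglyMeasurable (u n) volume)
    (hWint : ∀ n, Integrable (fun x : V3 => W (u n x))
      ∧ (∫ x : V3, W (u n x)) ≤ C)
    (h6 : ∀ n, Integrable (fun x : V3 => (u n x) ^ 6)
      ∧ (∫ x : V3, (u n x) ^ 6) ≤ C) :
    ∃ C' : ℝ, ∀ n, Integrable (fun x : V3 => (u n x) ^ 2)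
      ∧ (∫ x : V3, (u n x) ^ 2) ≤ C' := by
  have hc : 0 < m ^ 2 / 4 := by positivity
  have hquad : ∀ᶠ s in 𝓝 0, m ^ 2 / 4 * s ^ 2 ≤ W s :=
    eventually_mul_sq_le_of_deriv2 hWsmooth hW0 hW0' (by rw [hW0'']; linarith)
  obtain ⟨ε, hε, hball⟩ := Metric.eventually_nhds_iff.1 hquad
  have hbound := sq_le_of_mul_sq_le_of_abs_lt hWpos hc hε fun s hs =>
    hball (by rwa [Real.dist_0_eq_abs])
  refine ⟨(m ^ 2 / 4)⁻¹ * C + (ε ^ 4)⁻¹ * C, fun n => ?_⟩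
  obtain ⟨hint, hle⟩ :=
    integrable_sq_and_integral_sq_le hbound (hmeas n) (hWint n).1 (h6 n).1
  refine ⟨hint, hle.trans ?_⟩
  gcongr
  exacts [(hWint n).2, (h6 n).2]

/-- If `W ≥ 0` is `C²` with `W(0) = W'(0) = 0` and `W''(0) = m² > 0`, and
`∫W(uₙ)`, `∫|∇uₙ|²`, `∫uₙ⁶` are uniformly bounded, then `∫uₙ²` is bounded. -/
theorem L2_bound_from_W (W : ℝ → ℝ) (m C : ℝ) (hm : 0 < m)
    (hWsmooth : ContDiff ℝ 2 W) (hWpos : ∀ s : ℝ, 0 ≤ W s)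
    (hW0 : W 0 = 0) (hW0' : deriv W 0 = 0) (hW0'' : deriv (deriv W) 0 = m ^ 2)
    (u : ℕ → V3 → ℝ)
    (hmeas : ∀ n, AEStronglyMeasurable (u n) volume)
    (hWint : ∀ n, Integrable (fun x : V3 => W (u n x))
      ∧ (∫ x : V3, W (u n x)) ≤ C)
    (hgrad : ∀ n, (∫ x : V3, ∑ i : Fin 3, (pd i (u n) x) ^ 2) ≤ C)
    (h6 : ∀ n, Integrable (fun x : V3 => (u n x) ^ 6)
      ∧ (∫ x : V3, (u n x) ^ 6) ≤ C) :
    ∃ C' : ℝ, ∀ n, Integrable (fun x : V3 => (u n x) ^ 2)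
      ∧ (∫ x : V3, (u n x) ^ 2) ≤ C' :=
  L2_bound_from_W_general W m C hm hWsmooth hWpos hW0 hW0' hW0'' u hmeas hWint h6
end
end
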